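/- arXiv:1909.05442 — 6 statements merged into one kernel-verified Lean document; each statement's English description precedes it below -/
import Mathlib

section
/- Let H be a real Hilbert space, let η > 0 and ε ≥ 0, and let L : H → ℝ be convex and differentiable with gradient ∇L. Let f, f⁺, f★ ∈ H satisfy ‖f⁺ − (f − η ∇L(f))‖ ≤ ε, and set g̃ := (f − f⁺)/η. Then ‖f⁺ − f★‖² ≤ ‖f − f★‖² − 2η (L(f) − L(f★)) + 2ε ‖f − f★‖ + η² ‖g̃‖². -/
open scoped InnerProductSpace Topology

lemma grad_convex_ineq {H : Type*} [NormedAddCommGroup H] [InnerProductSpace ℝ H]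
    [CompleteSpace H] {L : H → ℝ} (hconv : ConvexOn ℝ Set.univ L)
    {x g : H} (hg : HasGradientAt L g x) (y : H) :
    L x + ⟪g, y - x⟫_ℝ ≤ L y := by
  have hline : HasDerivAt (fun t : ℝ => x + t • (y - x)) (y - x) 0 := by
    simpa using ((hasDerivAt_id (0:ℝ)).smul_const (y - x)).const_add x
  have hd : HasDerivAt (fun t : ℝ => L (x + t • (y - x))) ⟪g, y - x⟫_ℝ 0 := by
    have hx0 : x + (0:ℝ) • (y - x) = x := by simp
    have := (hx0 ▸ hg.hasFDerivAt).comp_hasDerivAt 0 hline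
    exact this
  set φ : ℝ → ℝ := fun t => L (x + t • (y - x)) with hφ
  have hslope : Filter.Tendsto (slope φ 0) (𝓝[>] 0) (𝓝 ⟪g, y - x⟫_ℝ) := by
    have := hasDerivAt_iff_tendsto_slope.mp hd
    exact this.mono_left (nhdsWithin_mono 0 (fun t ht => ne_of_gt ht))
  have hle : ⟪g, y - x⟫_ℝ ≤ L y - L x := by
    refine le_of_tendsto hslope ?_
    filter_upwards [Ioc_mem_nhdsGT_of_mem (Set.left_mem_Ico.mpr one_pos)] with t ht
    have ht0 : 0 < t := ht.1
    have hconvt := hconv.2 (Set.mem_univ x) (Set.mem_univ y)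
      (show (0:ℝ) ≤ 1 - t by linarith [ht.2]) ht0.le (by ring)
    have heq : x + t • (y - x) = (1 - t) • x + t • y := by
      module
    rw [slope_def_field]
    simp only [hφ, heq, zero_smul, add_zero, sub_zero]
    rw [div_le_iff₀ ht0]
    simp only [smul_eq_mul] at hconvt
    nlinarith [hconvt]
  linarith

/-- Lemma 3 (online descent relation): for an inexact gradient step `f⁺` from `f`
with step-size `η` and compression budget `ε`, and `g̃ = (f - f⁺)/η`, we have
`‖f⁺ - f★‖² ≤ ‖f - f★‖² - 2η(L f - L f★) + 2ε‖f - f★‖ + η²‖g̃‖²`. -/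
theorem stmt_0 {H : Type*} [NormedAddCommGroup H] [InnerProductSpace ℝ H] [CompleteSpace H]
    (η ε : ℝ) (hη : 0 < η) (hε : 0 ≤ ε)
    (L : H → ℝ) (L' : H → H)
    (hconv : ConvexOn ℝ Set.univ L)
    (hgrad : ∀ x : H, HasGradientAt L (L' x) x)
    (f fplus fstar : H)
    (hstep : ‖fplus - (f - η • L' f)‖ ≤ ε)
    (gtilde : H) (hgt : gtilde = η⁻¹ • (f - fplus)) :
    ‖fplus - fstar‖ ^ 2 ≤
      ‖f - fstar‖ ^ 2 - 2 * η * (L f - L fstar) + 2 * ε * ‖f - fstar‖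
        + η ^ 2 * ‖gtilde‖ ^ 2 := by
  have hgi := grad_convex_ineq hconv (hgrad f) fstar
  set e : H := fplus - (f - η • L' f) with he
  have hfp : f - fplus = η • L' f - e := by rw [he]; abel
  have hexp : ‖fplus - fstar‖^2 = ‖f - fstar‖^2 - 2 * ⟪f - fplus, f - fstar⟫_ℝ + ‖f - fplus‖^2 := by
    have h1 : fplus - fstar = (f - fstar) - (f - fplus) := by abel
    rw [h1, norm_sub_sq_real]
    ring_nf
    rw [real_inner_comm]
    ring
  have hnt : ‖f - fplus‖^2 = η^2 * ‖gtilde‖^2 := by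
    rw [hgt, norm_smul]
    simp [abs_of_pos (inv_pos.mpr hη)]
    field_simp
    rw [sq_abs]
  have hinner : ⟪f - fplus, f - fstar⟫_ℝ = η * ⟪L' f, f - fstar⟫_ℝ - ⟪e, f - fstar⟫_ℝ := by
    rw [hfp, inner_sub_left, real_inner_smul_left]
  have herr : ⟪e, f - fstar⟫_ℝ ≤ ε * ‖f - fstar‖ := by
    calc ⟪e, f - fstar⟫_ℝ ≤ ‖e‖ * ‖f - fstar‖ := real_inner_le_norm _ _
      _ ≤ ε * ‖f - fstar‖ := by
          exact mul_le_mul_of_nonneg_right hstep (norm_nonneg _)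
  have hcv : L f - L fstar ≤ ⟪L' f, f - fstar⟫_ℝ := by
    have : ⟪L' f, fstar - f⟫_ℝ = -⟪L' f, f - fstar⟫_ℝ := by
      rw [← inner_neg_right]; congr 1; abel
    linarith [hgi, this.symm.le]
  nlinarith [hexp, hnt, hinner, herr, hcv]
end

section
/- Let H be a real Hilbert space, let η > 0, ε ≥ 0, D ≥ 0, ℓ > 0. Let L : H → ℝ be convex and differentiable with gradient ∇L Lipschitz with constant ℓ, let f★ ∈ H be a global minimizer of L, and let f, f⁺ ∈ H satisfy ‖f⁺ − (f − η ∇L(f))‖ ≤ ε and ‖f − f★‖ ≤ D. Then ‖f⁺ − f★‖² ≤ ‖f − f★‖² − 2η(1 − 2ηℓ)(L(f) − L(f★)) + 2εD + 2ε². -/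
open InnerProductSpace

local notation "⟪" x ", " y "⟫" => @inner ℝ _ _ x y

/-- derivative of `L` along a line -/
lemma line_hasDerivAt {H : Type*} [NormedAddCommGroup H] [InnerProductSpace ℝ H]
    [CompleteSpace H] (L : H → ℝ) (L' : H → H)
    (hgrad : ∀ x : H, HasGradientAt L (L' x) x) (x v : H) (t : ℝ) :
    HasDerivAt (fun s : ℝ => L (x + s • v)) ⟪L' (x + t • v), v⟫ t := by
  have hc : HasDerivAt (fun s : ℝ => x + s • v) v t := by
    simpa using ((hasDerivAt_id t).smul_const v).const_add x
  have hf : HasFDerivAt L (toDual ℝ H (L' (x + t • v))) (x + t • v) := hgrad _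
  have := hf.comp_hasDerivAt t hc
  simpa [toDual_apply_apply, Function.comp_def] using this

/-- gradient inequality for convex functions -/
lemma grad_ineq {H : Type*} [NormedAddCommGroup H] [InnerProductSpace ℝ H]
    [CompleteSpace H] (L : H → ℝ) (L' : H → H)
    (hconv : ConvexOn ℝ Set.univ L)
    (hgrad : ∀ x : H, HasGradientAt L (L' x) x) (x y : H) :
    L x + ⟪L' x, y - x⟫ ≤ L y := by
  set φ : ℝ → ℝ := fun s => L (x + s • (y - x)) with hφ
  have hφconv : ConvexOn ℝ Set.univ φ := by
    have := hconv.comp_affineMap (AffineMap.lineMap x y : ℝ →ᵃ[ℝ] H)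
    have heq : φ = L ∘ (AffineMap.lineMap x y : ℝ →ᵃ[ℝ] H) := by
      funext s
      have h : x + s • (y - x) = (AffineMap.lineMap x y : ℝ →ᵃ[ℝ] H) s := by
        rw [AffineMap.lineMap_apply_module]
        module
      simpa [hφ] using congrArg L h
    rw [heq]
    simpa using this
  have hd : HasDerivAt φ ⟪L' x, y - x⟫ 0 := by
    simpa using line_hasDerivAt L L' hgrad x (y - x) 0
  have hs := hφconv.le_slope_of_hasDerivAt (Set.mem_univ (0:ℝ)) (Set.mem_univ (1:ℝ))
    one_pos hd
  have : slope φ 0 1 = L y - L x := by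
    simp [slope_def_field, hφ]
  rw [this] at hs
  linarith

/-- descent lemma for functions with Lipschitz gradient -/
lemma descent_lemma {H : Type*} [NormedAddCommGroup H] [InnerProductSpace ℝ H]
    [CompleteSpace H] (L : H → ℝ) (L' : H → H) (ℓ : ℝ) (hℓ : 0 < ℓ)
    (hgrad : ∀ x : H, HasGradientAt L (L' x) x)
    (hlip : ∀ f g : H, ‖L' f - L' g‖ ≤ ℓ * ‖f - g‖) (x y : H) :
    L y ≤ L x + ⟪L' x, y - x⟫ + ℓ / 2 * ‖y - x‖ ^ 2 := by
  set v := y - x with hv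
  set ψ : ℝ → ℝ := fun t => L (x + t • v) - t * ⟪L' x, v⟫ - ℓ * t ^ 2 / 2 * ‖v‖ ^ 2 with hψ
  have hψd : ∀ t : ℝ, HasDerivAt ψ
      (⟪L' (x + t • v), v⟫ - ⟪L' x, v⟫ - ℓ * t * ‖v‖ ^ 2) t := by
    intro t
    have h1 := line_hasDerivAt L L' hgrad x v t
    have h2 : HasDerivAt (fun t : ℝ => t * ⟪L' x, v⟫) ⟪L' x, v⟫ t := by
      simpa using (hasDerivAt_id t).mul_const ⟪L' x, v⟫
    have h3 : HasDerivAt (fun t : ℝ => ℓ * t ^ 2 / 2 * ‖v‖ ^ 2) (ℓ * t * ‖v‖ ^ 2) t := by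
      have : HasDerivAt (fun t : ℝ => t ^ 2) (2 * t) t := by
        simpa using hasDerivAt_pow 2 t
      have := ((this.const_mul ℓ).div_const 2).mul_const (‖v‖ ^ 2)
      exact this.congr_deriv (by ring)
    exact ((h1.sub h2).sub h3 :)
  have hanti : AntitoneOn ψ (Set.Icc (0:ℝ) 1) := by
    apply antitoneOn_of_deriv_nonpos (convex_Icc 0 1)
    · exact fun t _ => (hψd t).continuousAt.continuousWithinAt
    · exact fun t _ => ((hψd t).differentiableAt).differentiableWithinAt
    · intro t ht
      rw [interior_Icc] at ht
      rw [(hψd t).deriv]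
      have hdt : ⟪L' (x + t • v), v⟫ - ⟪L' x, v⟫ ≤ ℓ * t * ‖v‖ ^ 2 := by
        have h1 : ⟪L' (x + t • v), v⟫ - ⟪L' x, v⟫ = ⟪L' (x + t • v) - L' x, v⟫ := by
          rw [inner_sub_left]
        have h2 : ⟪L' (x + t • v) - L' x, v⟫ ≤ ‖L' (x + t • v) - L' x‖ * ‖v‖ :=
          real_inner_le_norm _ _
        have h3 : ‖L' (x + t • v) - L' x‖ ≤ ℓ * ‖t • v‖ := by
          simpa using hlip (x + t • v) x
        have h4 : ‖t • v‖ = t * ‖v‖ := by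
          rw [norm_smul, Real.norm_eq_abs, abs_of_pos ht.1]
        rw [h4] at h3
        have h5 := mul_le_mul_of_nonneg_right h3 (norm_nonneg v)
        nlinarith [norm_nonneg v]
      linarith
  have h01 := hanti (Set.mem_Icc.2 ⟨le_refl 0, zero_le_one⟩)
    (Set.mem_Icc.2 ⟨zero_le_one, le_refl 1⟩) zero_le_one
  have hψ0 : ψ 0 = L x := by simp [hψ]
  have hψ1 : ψ 1 = L y - ⟪L' x, v⟫ - ℓ / 2 * ‖v‖ ^ 2 := by
    simp only [hψ, hv, one_smul, one_pow, one_mul]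
    have : x + (y - x) = y := by abel
    rw [this]
    ring
  rw [hψ0, hψ1] at h01
  linarith

/-- Per-step squared descent relation toward the optimum (proof of Theorem 2(i)). -/
theorem stmt_7 {H : Type*} [NormedAddCommGroup H] [InnerProductSpace ℝ H] [CompleteSpace H]
    (η ε D ℓ : ℝ) (hη : 0 < η) (hε : 0 ≤ ε) (hD : 0 ≤ D) (hℓ : 0 < ℓ)
    (L : H → ℝ) (L' : H → H)
    (hconv : ConvexOn ℝ Set.univ L)
    (hgrad : ∀ x : H, HasGradientAt L (L' x) x)
    (hlip : ∀ f g : H, ‖L' f - L' g‖ ≤ ℓ * ‖f - g‖)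
    (fstar : H) (hmin : ∀ f : H, L fstar ≤ L f)
    (f fplus : H)
    (hstep : ‖fplus - (f - η • L' f)‖ ≤ ε)
    (hdist : ‖f - fstar‖ ≤ D) :
    ‖fplus - fstar‖ ^ 2 ≤
      ‖f - fstar‖ ^ 2 - 2 * η * (1 - 2 * η * ℓ) * (L f - L fstar) + 2 * ε * D + 2 * ε ^ 2 := by
  set Δ := L f - L fstar with hΔdef
  have hΔ : 0 ≤ Δ := by have := hmin f; linarith
  -- gradient inequality
  have hgi : Δ ≤ ⟪L' f, f - fstar⟫ := by
    have := grad_ineq L L' hconv hgrad f fstar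
    have h : ⟪L' f, fstar - f⟫ = -⟪L' f, f - fstar⟫ := by
      rw [← inner_neg_right]; congr 1; abel
    rw [h] at this
    linarith
  -- ‖L' f‖² ≤ 2 ℓ Δ
  have hgn : ‖L' f‖ ^ 2 ≤ 2 * ℓ * Δ := by
    have hdl := descent_lemma L L' ℓ hℓ hgrad hlip f (f - (1/ℓ) • L' f)
    have h1 : (f - (1/ℓ) • L' f) - f = -((1/ℓ) • L' f) := by abel
    rw [h1] at hdl
    have h2 : ⟪L' f, -((1/ℓ) • L' f)⟫ = -(1/ℓ) * ‖L' f‖ ^ 2 := by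
      rw [inner_neg_right, real_inner_smul_right, real_inner_self_eq_norm_sq]
      ring
    have h3 : ‖-((1/ℓ) • L' f)‖ ^ 2 = (1/ℓ)^2 * ‖L' f‖ ^ 2 := by
      rw [norm_neg, norm_smul, Real.norm_eq_abs, mul_pow, sq_abs]
    rw [h2, h3] at hdl
    have hm := hmin (f - (1/ℓ) • L' f)
    have hℓ' : ℓ ≠ 0 := ne_of_gt hℓ
    have : L fstar ≤ L f - 1 / (2*ℓ) * ‖L' f‖ ^ 2 := by
      have : L f + -(1/ℓ) * ‖L' f‖ ^ 2 + ℓ / 2 * ((1/ℓ)^2 * ‖L' f‖ ^ 2)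
          = L f - 1 / (2*ℓ) * ‖L' f‖ ^ 2 := by
        field_simp
        ring
      linarith [hm, hdl, this.symm.le, this.le]
    have h5 : 1 / (2*ℓ) * ‖L' f‖ ^ 2 ≤ Δ := by linarith
    have h6 := mul_le_mul_of_nonneg_left h5 (by positivity : (0:ℝ) ≤ 2*ℓ)
    have h7 : 2*ℓ * (1/(2*ℓ) * ‖L' f‖^2) = ‖L' f‖^2 := by field_simp
    calc ‖L' f‖ ^ 2 = 2*ℓ * (1/(2*ℓ) * ‖L' f‖^2) := h7.symm
      _ ≤ 2 * ℓ * Δ := h6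
  set e := fplus - (f - η • L' f) with hedef
  have hkey : fplus - fstar = (f - fstar) - η • L' f + e := by
    simp only [hedef]
    abel
  have hexp : ‖fplus - fstar‖ ^ 2 = ‖(f - fstar) - η • L' f‖ ^ 2
      + 2 * ⟪(f - fstar) - η • L' f, e⟫ + ‖e‖ ^ 2 := by
    rw [hkey, norm_add_sq_real]
  have hgsq : ‖(f - fstar) - η • L' f‖ ^ 2
      = ‖f - fstar‖ ^ 2 - 2 * η * ⟪L' f, f - fstar⟫ + η ^ 2 * ‖L' f‖ ^ 2 := by
    rw [norm_sub_sq_real, norm_smul, real_inner_smul_right, Real.norm_eq_abs,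
      abs_of_pos hη, real_inner_comm]
    ring
  have hgnorm : ‖(f - fstar) - η • L' f‖ ≤ D + η * ‖L' f‖ := by
    calc ‖(f - fstar) - η • L' f‖ ≤ ‖f - fstar‖ + ‖η • L' f‖ := norm_sub_le _ _
      _ ≤ D + η * ‖L' f‖ := by
          rw [norm_smul, Real.norm_eq_abs, abs_of_pos hη]
          linarith
  have hinner : ⟪(f - fstar) - η • L' f, e⟫ ≤ (D + η * ‖L' f‖) * ε := by
    calc ⟪(f - fstar) - η • L' f, e⟫ ≤ ‖(f - fstar) - η • L' f‖ * ‖e‖ :=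
          real_inner_le_norm _ _
      _ ≤ (D + η * ‖L' f‖) * ε := by
          apply mul_le_mul hgnorm hstep (norm_nonneg _)
          have := norm_nonneg ((f - fstar) - η • L' f)
          linarith
  have hesq : ‖e‖ ^ 2 ≤ ε ^ 2 := by
    have := norm_nonneg e
    nlinarith
  -- combine
  have hL'nn : 0 ≤ ‖L' f‖ := norm_nonneg _
  nlinarith [hexp, hgsq, hinner, hesq, hgi, hgn, sq_nonneg (ε - η * ‖L' f‖)]
end

section
/- Let H be a real Hilbert space, let ℓ > 0, μ > 0, ε ≥ 0, D ≥ 0, and let η satisfy 0 < η < μ/ℓ² and 2η(μ − ηℓ²) ≤ 1; set ρ := √(1 − 2η(μ − ηℓ²)), so ρ ∈ [0,1). Let L : H → ℝ be convex and differentiable with gradient ∇L Lipschitz with constant ℓ, and let f★ ∈ H be a global minimizer of L satisfying the strong-convexity property L(f) − L(f★) ≥ μ‖f − f★‖² for all f ∈ H. Let f, f⁺ ∈ H satisfy the inexact gradient step ‖f⁺ − (f − η ∇L(f))‖ ≤ ε and ‖f − f★‖ ≤ D. Then ‖f⁺ − f★‖ ≤ ρ ‖f − f★‖ + √(2εD +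 2ε²). -/
open InnerProductSpace Set

lemma grad_inner_le_aux {H : Type*} [NormedAddCommGroup H] [InnerProductSpace ℝ H]
    [CompleteSpace H] {L : H → ℝ} {g x y : H}
    (hconv : ConvexOn ℝ Set.univ L) (hg : HasGradientAt L g x) :
    ⟪g, y - x⟫_ℝ ≤ L y - L x := by
  set φ : ℝ → ℝ := fun t => L (AffineMap.lineMap x y t) with hφ
  have hφc : ConvexOn ℝ Set.univ φ := by
    have := hconv.comp_affineMap (AffineMap.lineMap x y : ℝ →ᵃ[ℝ] H)
    exact this
  have hc : HasDerivAt (fun t : ℝ => (AffineMap.lineMap x y t : H)) (y - x) 0 := by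
    have h1 : HasDerivAt (fun t : ℝ => (1 - t) • x) ((-1 : ℝ) • x) 0 :=
      ((hasDerivAt_id (0:ℝ)).const_sub 1).smul_const x
    have h2 : HasDerivAt (fun t : ℝ => t • y) ((1 : ℝ) • y) 0 :=
      (hasDerivAt_id (0:ℝ)).smul_const y
    have h3 := h1.add h2
    have he : (fun t : ℝ => (AffineMap.lineMap x y t : H))
        = fun t : ℝ => (1 - t) • x + t • y := by
      funext t; simp only [AffineMap.lineMap_apply_module']; module
    rw [he]
    convert h3 using 1
    · rfl
    module
  have hg' : HasFDerivAt L (InnerProductSpace.toDual ℝ H g) ((AffineMap.lineMap x y : ℝ →ᵃ[ℝ] H) 0) := by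
    simpa using hg.hasFDerivAt
  have hd : HasDerivAt φ ⟪g, y - x⟫_ℝ 0 := by
    have := hg'.comp_hasDerivAt 0 hc
    exact this
  have := hφc.le_slope_of_hasDerivAt (mem_univ (0:ℝ)) (mem_univ (1:ℝ)) one_pos hd
  simpa [slope_def_field, hφ] using this

set_option maxHeartbeats 1000000 in
/-- Per-step contraction toward the optimum in the strongly convex case
(proof of Theorem 2(ii)). -/
theorem stmt_9 {H : Type*} [NormedAddCommGroup H] [InnerProductSpace ℝ H] [CompleteSpace H]
    (ℓ μ ε D η : ℝ) (hℓ : 0 < ℓ) (hμ : 0 < μ) (hε : 0 ≤ ε) (hD : 0 ≤ D)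
    (hη : 0 < η) (hημ : η < μ / ℓ ^ 2) (hcontr : 2 * η * (μ - η * ℓ ^ 2) ≤ 1)
    (L : H → ℝ) (L' : H → H)
    (hconv : ConvexOn ℝ Set.univ L)
    (hgrad : ∀ x : H, HasGradientAt L (L' x) x)
    (hlip : ∀ f g : H, ‖L' f - L' g‖ ≤ ℓ * ‖f - g‖)
    (fstar : H) (hmin : ∀ f : H, L fstar ≤ L f)
    (hsc : ∀ f : H, μ * ‖f - fstar‖ ^ 2 ≤ L f - L fstar)
    (f fplus : H)
    (hstep : ‖fplus - (f - η • L' f)‖ ≤ ε)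
    (hdist : ‖f - fstar‖ ≤ D) :
    ‖fplus - fstar‖ ≤
      Real.sqrt (1 - 2 * η * (μ - η * ℓ ^ 2)) * ‖f - fstar‖
        + Real.sqrt (2 * ε * D + 2 * ε ^ 2) := by
  set ρsq : ℝ := 1 - 2 * η * (μ - η * ℓ ^ 2) with hρsq
  have hρ0 : 0 ≤ ρsq := by simp only [hρsq]; linarith
  -- gradient at minimizer is zero
  have hloc : IsLocalMin L fstar := Filter.Eventually.of_forall hmin
  have hz' := hloc.hasFDerivAt_eq_zero (hgrad fstar).hasFDerivAt
  have hzero : L' fstar = 0 := by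
    have := congrArg (InnerProductSpace.toDual ℝ H).symm hz'
    simpa using this
  have hng : ‖L' f‖ ≤ ℓ * ‖f - fstar‖ := by
    have := hlip f fstar; rwa [hzero, sub_zero] at this
  have hinner : μ * ‖f - fstar‖ ^ 2 ≤ ⟪L' f, f - fstar⟫_ℝ := by
    have h1 := grad_inner_le_aux (y := fstar) hconv (hgrad f)
    have h2 : ⟪L' f, fstar - f⟫_ℝ = - ⟪L' f, f - fstar⟫_ℝ := by
      rw [← inner_neg_right]; congr 1; abel
    have := hsc f
    rw [h2] at h1
    linarith
  -- contraction of the exact gradient step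
  set g : H := f - η • L' f with hgdef
  have hkey : ‖g - fstar‖ ^ 2 ≤ ρsq * ‖f - fstar‖ ^ 2 := by
    have hexp : g - fstar = (f - fstar) - η • L' f := by rw [hgdef]; abel
    rw [hexp, norm_sub_sq_real]
    rw [real_inner_smul_right, norm_smul]
    have hvsq : ‖L' f‖ ^ 2 ≤ ℓ ^ 2 * ‖f - fstar‖ ^ 2 := by
      have h0 : 0 ≤ ‖L' f‖ := norm_nonneg _
      nlinarith [hng]
    rw [Real.norm_eq_abs, abs_of_pos hη, real_inner_comm]
    have h1 := mul_le_mul_of_nonneg_left hinner (by positivity : (0:ℝ) ≤ 2 * η)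
    have h2 := mul_le_mul_of_nonneg_left hvsq (by positivity : (0:ℝ) ≤ η ^ 2)
    have h3 : (η * ‖L' f‖) ^ 2 = η ^ 2 * ‖L' f‖ ^ 2 := by ring
    rw [h3, hρsq]
    nlinarith [h1, h2]
  have hgle : ‖g - fstar‖ ≤ Real.sqrt ρsq * ‖f - fstar‖ := by
    have h1 : ‖g - fstar‖ = Real.sqrt (‖g - fstar‖ ^ 2) := by
      rw [Real.sqrt_sq (norm_nonneg _)]
    rw [h1, show Real.sqrt ρsq * ‖f - fstar‖
        = Real.sqrt (ρsq * ‖f - fstar‖ ^ 2) by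
      rw [Real.sqrt_mul hρ0, Real.sqrt_sq (norm_nonneg _)]]
    exact Real.sqrt_le_sqrt hkey
  have hεle : ε ≤ Real.sqrt (2 * ε * D + 2 * ε ^ 2) := by
    have h : ε ^ 2 ≤ 2 * ε * D + 2 * ε ^ 2 := by nlinarith [mul_nonneg hε hD, sq_nonneg ε]
    calc ε = Real.sqrt (ε ^ 2) := (Real.sqrt_sq hε).symm
      _ ≤ _ := Real.sqrt_le_sqrt h
  have htri : ‖fplus - fstar‖ ≤ ‖fplus - g‖ + ‖g - fstar‖ := by
    have := dist_triangle fplus g fstar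
    simpa [dist_eq_norm] using this
  calc ‖fplus - fstar‖ ≤ ‖fplus - g‖ + ‖g - fstar‖ := htri
    _ ≤ ε + Real.sqrt ρsq * ‖f - fstar‖ := add_le_add hstep hgle
    _ ≤ Real.sqrt ρsq * ‖f - fstar‖ + Real.sqrt (2 * ε * D + 2 * ε ^ 2) := by linarith
end

section
/- Let A be a nonempty set, let k ≤ m be integers, and for each t ∈ {k,…,m} let L_t : A → ℝ. Assume there exist reals d_t ≥ 0 (for t = k+1,…,m) with |L_t(f) − L_{t−1}(f)| ≤ d_t for all f ∈ A, and set V := Σ_{t=k+1}^m d_t. Suppose f_k★ ∈ A minimizes L_k over A, for each t ∈ {k,…,m} f_t★ ∈ A minimizes L_t over A, and f_s★ ∈ A minimizes the batch sum f ↦ Σ_{t=k}^m L_t(f) over A. Then Σ_{t=k}^m (L_t(f_s★) − L_t(f_t★)) ≤ 2(m − k + 1) V. -/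
/-- Per-batch non-stationarity bound: the gap between the single best batch action and the
dynamic optimal actions over a batch of length `m − k + 1` is at most twice the batch
length times the batch variation. -/
theorem stmt_14 {A : Type*} [Nonempty A]
    (k m : ℕ) (hkm : k ≤ m)
    (L : ℕ → A → ℝ) (d : ℕ → ℝ)
    (hd : ∀ t ∈ Finset.Icc (k + 1) m, 0 ≤ d t)
    (hvar : ∀ t ∈ Finset.Icc (k + 1) m, ∀ f : A, |L t f - L (t - 1) f| ≤ d t)
    (fk : A) (hfk : ∀ f : A, L k fk ≤ L k f)
    (fstar : ℕ → A) (hfstar : ∀ t ∈ Finset.Icc k m, ∀ f : A, L t (fstar t) ≤ L t f)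
    (fs : A)
    (hfs : ∀ f : A, ∑ t ∈ Finset.Icc k m, L t fs ≤ ∑ t ∈ Finset.Icc k m, L t f) :
    ∑ t ∈ Finset.Icc k m, (L t fs - L t (fstar t)) ≤
      2 * ((m : ℝ) - k + 1) * ∑ s ∈ Finset.Icc (k + 1) m, d s := by
  set V : ℝ := ∑ s ∈ Finset.Icc (k + 1) m, d s with hV
  have hVnonneg : 0 ≤ V := Finset.sum_nonneg hd
  -- key: for t in [k,m], |L t f - L k f| ≤ V
  have key : ∀ t, k ≤ t → t ≤ m → ∀ f : A, |L t f - L k f| ≤ V := by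
    intro t hkt htm f
    have h1 : |L t f - L k f| ≤ ∑ s ∈ Finset.Icc (k + 1) t, d s := by
      induction t, hkt using Nat.le_induction with
      | base => simp
      | succ n hn ih =>
        have hnm : n ≤ m := le_trans (Nat.le_succ n) htm
        have ihn := ih hnm
        have hmem : n + 1 ∈ Finset.Icc (k + 1) m := by
          simp [Nat.succ_le_succ hn, htm]
        have hstep := hvar (n + 1) hmem f
        simp only [Nat.add_sub_cancel] at hstep
        have : Finset.Icc (k + 1) (n + 1) = insert (n + 1) (Finset.Icc (k + 1) n) := by
          rw [← Finset.insert_Icc_right_eq_Icc_add_one (Nat.succ_le_succ hn)]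
        rw [this, Finset.sum_insert (by simp)]
        calc |L (n + 1) f - L k f|
            = |(L (n + 1) f - L n f) + (L n f - L k f)| := by ring_nf
          _ ≤ |L (n + 1) f - L n f| + |L n f - L k f| := abs_add_le _ _
          _ ≤ d (n + 1) + ∑ s ∈ Finset.Icc (k + 1) n, d s := add_le_add hstep ihn
    refine h1.trans (Finset.sum_le_sum_of_subset_of_nonneg ?_ ?_)
    · exact Finset.Icc_subset_Icc_right htm
    · intro s hs _; exact hd s hs
  -- per-term bound: L t fk - L t (fstar t) ≤ 2V
  have per : ∀ t ∈ Finset.Icc k m, L t fk - L t (fstar t) ≤ 2 * V := by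
    intro t ht
    rw [Finset.mem_Icc] at ht
    have h1 : L t fk - L k fk ≤ V := le_trans (le_abs_self _) (key t ht.1 ht.2 fk)
    have h2 : L k (fstar t) - L t (fstar t) ≤ V := by
      have := key t ht.1 ht.2 (fstar t)
      rw [abs_sub_comm] at this
      exact le_trans (le_abs_self _) this
    have h3 : L k fk ≤ L k (fstar t) := hfk (fstar t)
    linarith
  have hsum : ∑ t ∈ Finset.Icc k m, (L t fs - L t (fstar t)) ≤
      ∑ t ∈ Finset.Icc k m, (L t fk - L t (fstar t)) := by
    rw [Finset.sum_sub_distrib, Finset.sum_sub_distrib]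
    exact sub_le_sub_right (hfs fk) _
  have hcard : ((Finset.Icc k m).card : ℝ) = (m : ℝ) - k + 1 := by
    rw [Nat.card_Icc]
    push_cast [Nat.succ_sub hkm, Nat.cast_sub hkm]
    ring
  calc ∑ t ∈ Finset.Icc k m, (L t fs - L t (fstar t))
      ≤ ∑ t ∈ Finset.Icc k m, (L t fk - L t (fstar t)) := hsum
    _ ≤ ∑ t ∈ Finset.Icc k m, 2 * V := Finset.sum_le_sum per
    _ = ((Finset.Icc k m).card : ℝ) * (2 * V) := by rw [Finset.sum_const, nsmul_eq_mul]
    _ = 2 * ((m : ℝ) - k + 1) * V := by rw [hcard]; ring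
end

section
/- Let A be a nonempty set, let T ≥ 1 and Δ ≥ 1 be integers, and let L_1,…,L_T : A → ℝ. For each t let f_t★ ∈ A minimize L_t over A, and assume there exist reals d_t ≥ 0 (for t = 2,…,T) with |L_t(f) − L_{t−1}(f)| ≤ d_t for all f ∈ A; set V_T := Σ_{t=2}^T d_t. Partition {1,…,T} into m = ⌈T/Δ⌉ consecutive batches T_1,…,T_m, each of size at most Δ (T_s = {(s−1)Δ+1, …, min(sΔ, T)}), and for each s let f_s★ ∈ A minimize the batch sum f ↦ Σ_{t∈T_s} L_t(f) over A. If the actions f_1,…,f_T ∈ A satisfy the per-batch static regret bound Σ_{t∈T_s} (L_t(f_t) − L_t(f_s★)) ≤ R for every s = 1,…,m, then the dynamic regret satisfies Σ_{t=1}^T (L_t(f_t) − L_t(f_t★)) ≤ ⌈T/Δ⌉ · R + 2Δ V_T. -/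
/-- Batching decomposition at the heart of Theorem 1: dynamic regret is bounded by the
number of batches times the per-batch static regret plus `2Δ` times the total variation. -/
theorem stmt_15 {A : Type*} [Nonempty A]
    (T Δ : ℕ) (hT : 1 ≤ T) (hΔ : 1 ≤ Δ)
    (L : ℕ → A → ℝ)
    (fstar : ℕ → A) (hfstar : ∀ t ∈ Finset.Icc 1 T, ∀ f : A, L t (fstar t) ≤ L t f)
    (d : ℕ → ℝ)
    (hd : ∀ t ∈ Finset.Icc 2 T, 0 ≤ d t)
    (hvar : ∀ t ∈ Finset.Icc 2 T, ∀ f : A, |L t f - L (t - 1) f| ≤ d t)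
    (fb : ℕ → A)
    (hfb : ∀ s ∈ Finset.Icc 1 ((T + Δ - 1) / Δ), ∀ f : A,
      ∑ t ∈ Finset.Icc ((s - 1) * Δ + 1) (min (s * Δ) T), L t (fb s) ≤
        ∑ t ∈ Finset.Icc ((s - 1) * Δ + 1) (min (s * Δ) T), L t f)
    (f : ℕ → A) (R : ℝ)
    (hreg : ∀ s ∈ Finset.Icc 1 ((T + Δ - 1) / Δ),
      ∑ t ∈ Finset.Icc ((s - 1) * Δ + 1) (min (s * Δ) T), (L t (f t) - L t (fb s)) ≤ R) :
    ∑ t ∈ Finset.Icc 1 T, (L t (f t) - L t (fstar t)) ≤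
      (((T + Δ - 1) / Δ : ℕ) : ℝ) * R + 2 * (Δ : ℝ) * ∑ t ∈ Finset.Icc 2 T, d t := by
  have hΔpos : 0 < Δ := hΔ
  set m := (T + Δ - 1) / Δ with hm
  set B : ℕ → Finset ℕ := fun s => Finset.Icc ((s - 1) * Δ + 1) (min (s * Δ) T) with hB
  set D : ℕ → ℝ := fun s => ∑ u ∈ Finset.Icc ((s - 1) * Δ + 2) (min (s * Δ) T), d u with hD
  -- arithmetic fact: (s-1)*Δ + Δ = s*Δ for s ≥ 1
  have hmul : ∀ s : ℕ, 1 ≤ s → (s - 1) * Δ + Δ = s * Δ := by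
    intro s hs
    have h1 : (s - 1) + 1 = s := by omega
    calc (s - 1) * Δ + Δ = ((s - 1) + 1) * Δ := by rw [Nat.succ_mul]
    _ = s * Δ := by rw [h1]
  -- batches are pairwise "ordered-disjoint"
  have hdisj : ∀ s1 s2 : ℕ, 1 ≤ s1 → s1 < s2 → Disjoint (B s1) (B s2) := by
    intro s1 s2 hs1 hlt
    rw [Finset.disjoint_left]
    intro t ht1 ht2
    simp only [hB, Finset.mem_Icc, le_min_iff] at ht1 ht2
    have h1 : s1 * Δ ≤ (s2 - 1) * Δ := Nat.mul_le_mul_right Δ (by omega)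
    omega
  -- the partition of Icc 1 T into batches
  have hcover : Finset.Icc 1 T = (Finset.Icc 1 m).biUnion B := by
    ext t
    simp only [Finset.mem_biUnion, Finset.mem_Icc, hB, le_min_iff]
    constructor
    · rintro ⟨h1, h2⟩
      refine ⟨(t - 1) / Δ + 1, ⟨Nat.succ_le_succ (Nat.zero_le _), ?_⟩, ?_, ?_, h2⟩
      · have h3 : (t - 1) / Δ + 1 = (t - 1 + Δ) / Δ := (Nat.add_div_right _ hΔpos).symm
        rw [hm, h3]
        exact Nat.div_le_div_right (by omega)
      · rw [Nat.add_sub_cancel]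
        have h4 : (t - 1) / Δ * Δ ≤ t - 1 := Nat.div_mul_le_self _ _
        omega
      · have h5 : t - 1 < ((t - 1) / Δ + 1) * Δ :=
          (Nat.div_lt_iff_lt_mul hΔpos).mp (Nat.lt_succ_self _)
        omega
    · rintro ⟨s, ⟨hs1, hs2⟩, h1, h2, h3⟩
      exact ⟨by omega, h3⟩
  have hpart : ∀ g : ℕ → ℝ,
      ∑ t ∈ Finset.Icc 1 T, g t = ∑ s ∈ Finset.Icc 1 m, ∑ t ∈ B s, g t := by
    intro g
    rw [hcover]
    exact Finset.sum_biUnion (fun s1 hs1 s2 hs2 hne => by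
      rcases lt_or_gt_of_ne hne with h | h
      · exact hdisj s1 s2 (Finset.mem_Icc.mp hs1).1 h
      · exact (hdisj s2 s1 (Finset.mem_Icc.mp hs2).1 h).symm)
  -- facts about batch s for s ∈ Icc 1 m
  have hbatch : ∀ s ∈ Finset.Icc 1 m, (s - 1) * Δ + 1 ≤ T ∧ s * Δ ≤ T + Δ - 1 := by
    intro s hs
    rw [Finset.mem_Icc] at hs
    have h1 : s * Δ ≤ T + Δ - 1 := (Nat.le_div_iff_mul_le hΔpos).mp hs.2
    have h2 := hmul s hs.1
    exact ⟨by omega, h1⟩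
  -- Lipschitz-in-time lemma via telescoping
  have hLip : ∀ g : A, ∀ a : ℕ, 1 ≤ a → ∀ b : ℕ, a ≤ b → b ≤ T →
      |L b g - L a g| ≤ ∑ u ∈ Finset.Icc (a + 1) b, d u := by
    intro g a ha
    refine Nat.le_induction ?_ ?_
    · intro _
      simp
    · intro b hab ih hb1
      have hb : b ≤ T := by omega
      have hmem : b + 1 ∈ Finset.Icc 2 T := Finset.mem_Icc.mpr ⟨by omega, hb1⟩
      have h1 := hvar (b + 1) hmem g
      simp only [Nat.add_sub_cancel] at h1
      have h2 := ih hb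
      rw [Finset.sum_Icc_succ_top (by omega : a + 1 ≤ b + 1)]
      calc |L (b + 1) g - L a g| ≤ |L b g - L a g| + |L (b + 1) g - L b g| := by
            have := abs_add_le (L b g - L a g) (L (b + 1) g - L b g)
            simpa [sub_add_sub_cancel'] using this
      _ ≤ (∑ u ∈ Finset.Icc (a + 1) b, d u) + d (b + 1) := add_le_add h2 h1
  -- per-batch bound on the comparator-switching cost
  have hkey : ∀ s ∈ Finset.Icc 1 m, ∀ t ∈ B s,
      L t (fstar ((s - 1) * Δ + 1)) - L t (fstar t) ≤ 2 * D s := by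
    intro s hs t ht
    obtain ⟨hτT, _⟩ := hbatch s hs
    set τ := (s - 1) * Δ + 1 with hτ
    simp only [hB, Finset.mem_Icc, le_min_iff] at ht
    obtain ⟨hτt, htΔ, htT⟩ := ht
    have hsum_sub : ∑ u ∈ Finset.Icc (τ + 1) t, d u ≤ D s := by
      apply Finset.sum_le_sum_of_subset_of_nonneg
      · apply Finset.Icc_subset_Icc (by omega) (le_min htΔ htT)
      · intro u hu _
        rw [Finset.mem_Icc, le_min_iff] at hu
        exact hd u (Finset.mem_Icc.mpr ⟨by omega, hu.2.2⟩)
    have h1 := abs_le.mp (hLip (fstar τ) τ (by omega) t hτt htT)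
    have h2 := hfstar τ (Finset.mem_Icc.mpr ⟨by omega, hτT⟩) (fstar t)
    have h3 := abs_le.mp (hLip (fstar t) τ (by omega) t hτt htT)
    linarith [h1.2, h3.1]
  -- D s is nonnegative
  have hDnn : ∀ s ∈ Finset.Icc 1 m, 0 ≤ D s := by
    intro s hs
    apply Finset.sum_nonneg
    intro u hu
    rw [Finset.mem_Icc, le_min_iff] at hu
    exact hd u (Finset.mem_Icc.mpr ⟨by omega, hu.2.2⟩)
  -- batch cardinality ≤ Δ
  have hcard : ∀ s ∈ Finset.Icc 1 m, (B s).card ≤ Δ := by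
    intro s hs
    rw [Finset.mem_Icc] at hs
    have h2 := hmul s hs.1
    simp only [hB, Nat.card_Icc]
    have : min (s * Δ) T ≤ s * Δ := min_le_left _ _
    omega
  -- per-batch total bound
  have hbatch_bound : ∀ s ∈ Finset.Icc 1 m,
      ∑ t ∈ B s, (L t (f t) - L t (fstar t)) ≤ R + 2 * (Δ : ℝ) * D s := by
    intro s hs
    have hsplit : ∀ t : ℕ, L t (f t) - L t (fstar t) =
        (L t (f t) - L t (fb s)) + (L t (fb s) - L t (fstar t)) := fun t => by ring
    calc ∑ t ∈ B s, (L t (f t) - L t (fstar t))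
        = (∑ t ∈ B s, (L t (f t) - L t (fb s))) +
          (∑ t ∈ B s, (L t (fb s) - L t (fstar t))) := by
          rw [← Finset.sum_add_distrib]
          exact Finset.sum_congr rfl (fun t _ => hsplit t)
    _ ≤ R + 2 * (Δ : ℝ) * D s := by
        have hA : ∑ t ∈ B s, (L t (f t) - L t (fb s)) ≤ R := hreg s hs
        have hB2 : ∑ t ∈ B s, (L t (fb s) - L t (fstar t)) ≤ 2 * (Δ : ℝ) * D s := by
          have hstep1 : ∑ t ∈ B s, (L t (fb s) - L t (fstar t)) ≤
              ∑ t ∈ B s, (L t (fstar ((s - 1) * Δ + 1)) - L t (fstar t)) := by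
            rw [Finset.sum_sub_distrib, Finset.sum_sub_distrib]
            exact sub_le_sub_right (hfb s hs (fstar ((s - 1) * Δ + 1))) _
          have hstep2 : ∑ t ∈ B s, (L t (fstar ((s - 1) * Δ + 1)) - L t (fstar t)) ≤
              (B s).card • (2 * D s) :=
            Finset.sum_le_card_nsmul _ _ _ (fun t ht => hkey s hs t ht)
          have hstep3 : ((B s).card : ℝ) * (2 * D s) ≤ (Δ : ℝ) * (2 * D s) := by
            apply mul_le_mul_of_nonneg_right _ (by linarith [hDnn s hs])
            exact_mod_cast hcard s hs
          calc ∑ t ∈ B s, (L t (fb s) - L t (fstar t))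
              ≤ ((B s).card : ℝ) * (2 * D s) := by
                have := hstep2
                simpa [nsmul_eq_mul] using hstep1.trans this
          _ ≤ (Δ : ℝ) * (2 * D s) := hstep3
          _ = 2 * (Δ : ℝ) * D s := by ring
        linarith
  -- sum of the D s is at most the total variation
  have hDsum : ∑ s ∈ Finset.Icc 1 m, D s ≤ ∑ t ∈ Finset.Icc 2 T, d t := by
    set C : ℕ → Finset ℕ := fun s => Finset.Icc ((s - 1) * Δ + 2) (min (s * Δ) T) with hC
    have hCsub : ∀ s, C s ⊆ B s := fun s =>
      Finset.Icc_subset_Icc (by omega) le_rfl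
    have hdisjC : ∀ s1 ∈ Finset.Icc 1 m, ∀ s2 ∈ Finset.Icc 1 m, s1 ≠ s2 →
        Disjoint (C s1) (C s2) := by
      intro s1 hs1 s2 hs2 hne
      rcases lt_or_gt_of_ne hne with h | h
      · exact Finset.disjoint_of_subset_left (hCsub s1)
          (Finset.disjoint_of_subset_right (hCsub s2)
            (hdisj s1 s2 (Finset.mem_Icc.mp hs1).1 h))
      · exact Finset.disjoint_of_subset_left (hCsub s1)
          (Finset.disjoint_of_subset_right (hCsub s2)
            (hdisj s2 s1 (Finset.mem_Icc.mp hs2).1 h).symm)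
    have h1 : ∑ s ∈ Finset.Icc 1 m, D s =
        ∑ u ∈ (Finset.Icc 1 m).biUnion C, d u :=
      (Finset.sum_biUnion hdisjC).symm
    rw [h1]
    apply Finset.sum_le_sum_of_subset_of_nonneg
    · intro u hu
      rw [Finset.mem_biUnion] at hu
      obtain ⟨s, hs, hu⟩ := hu
      rw [hC] at hu
      rw [Finset.mem_Icc, le_min_iff] at hu
      exact Finset.mem_Icc.mpr ⟨by omega, hu.2.2⟩
    · intro u hu _
      exact hd u hu
  -- put everything together
  rw [hpart]
  calc ∑ s ∈ Finset.Icc 1 m, ∑ t ∈ B s, (L t (f t) - L t (fstar t))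
      ≤ ∑ s ∈ Finset.Icc 1 m, (R + 2 * (Δ : ℝ) * D s) :=
        Finset.sum_le_sum hbatch_bound
  _ = (m : ℝ) * R + 2 * (Δ : ℝ) * ∑ s ∈ Finset.Icc 1 m, D s := by
        rw [Finset.sum_add_distrib, Finset.sum_const, ← Finset.mul_sum]
        simp [Nat.card_Icc, nsmul_eq_mul]
  _ ≤ (m : ℝ) * R + 2 * (Δ : ℝ) * ∑ t ∈ Finset.Icc 2 T, d t := by
        have : (0 : ℝ) ≤ 2 * (Δ : ℝ) := by positivity
        nlinarith [hDsum]
end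

section
/- Let H be a real Hilbert space, let Z ≥ 0, D ≥ 0, let T ≥ 1 be an integer, and set η = 1/√T and ε = 1/T. For each t = 1,…,T let L_t : H → ℝ be convex and differentiable with gradient ∇L_t, let f★ ∈ H, and let f_1,…,f_{T+1} ∈ H satisfy the inexact gradient step ‖f_{t+1} − (f_t − η ∇L_t(f_t))‖ ≤ ε for all t = 1,…,T, together with ‖∇L_t(f_t)‖ ≤ Z and ‖f_t − f★‖ ≤ D for all t. Then Σ_{t=1}^T (L_t(f_t) − L_t(f★)) ≤ (‖f_1 − f★‖²/2 + D + Z² + 1) · √T. -/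
open InnerProductSpace

lemma grad_ineq_aux {H : Type*} [NormedAddCommGroup H] [InnerProductSpace ℝ H] [CompleteSpace H]
    {L : H → ℝ} {g x : H} (hc : ConvexOn ℝ Set.univ L) (hg : HasGradientAt L g x) (y : H) :
    L x - L y ≤ ⟪g, x - y⟫_ℝ := by
  have hφ : ConvexOn ℝ Set.univ (L ∘ (AffineMap.lineMap x y : ℝ →ᵃ[ℝ] H)) := by
    simpa using hc.comp_affineMap (AffineMap.lineMap x y)
  have hψ : HasDerivAt (fun s : ℝ => (AffineMap.lineMap x y : ℝ →ᵃ[ℝ] H) s) (y - x) 0 := by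
    have h1 : HasDerivAt (fun s : ℝ => s • (y - x) + x) (y - x) 0 := by
      simpa using ((hasDerivAt_id (0:ℝ)).smul_const (y - x)).add_const x
    exact h1.congr_of_eventuallyEq (Filter.Eventually.of_forall fun s => by
      simp [AffineMap.lineMap_apply])
  have hF : HasFDerivAt L (toDual ℝ H g) ((AffineMap.lineMap x y : ℝ →ᵃ[ℝ] H) 0) := by
    simpa using hg.hasFDerivAt
  have hcomp : HasDerivAt (L ∘ (AffineMap.lineMap x y : ℝ →ᵃ[ℝ] H)) ⟪g, y - x⟫_ℝ 0 := by
    simpa using hF.comp_hasDerivAt 0 hψ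
  have hsl := hφ.le_slope_of_hasDerivAt (Set.mem_univ (0:ℝ)) (Set.mem_univ (1:ℝ)) zero_lt_one hcomp
  have hsl' : ⟪g, y - x⟫_ℝ ≤ L y - L x := by
    simpa [slope, Function.comp] using hsl
  have : ⟪g, x - y⟫_ℝ = -⟪g, y - x⟫_ℝ := by
    rw [← inner_neg_right]; simp
  linarith [hsl', this.ge, this.le]

/-- No-regret corollary of the static regret theorem: with step-size `η = 1/√T` and
compression budget `ε = 1/T`, the static regret is `O(√T)`. -/
theorem stmt_19 {H : Type*} [NormedAddCommGroup H] [InnerProductSpace ℝ H] [CompleteSpace H]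
    (Z D : ℝ) (hZ : 0 ≤ Z) (hD : 0 ≤ D)
    (T : ℕ) (hT : 1 ≤ T)
    (η ε : ℝ) (hη : η = 1 / Real.sqrt T) (hε : ε = 1 / T)
    (L : ℕ → H → ℝ) (L' : ℕ → H → H)
    (hconv : ∀ t ∈ Finset.Icc 1 T, ConvexOn ℝ Set.univ (L t))
    (hgrad : ∀ t ∈ Finset.Icc 1 T, ∀ x : H, HasGradientAt (L t) (L' t x) x)
    (fstar : H) (f : ℕ → H)
    (hstep : ∀ t ∈ Finset.Icc 1 T, ‖f (t + 1) - (f t - η • L' t (f t))‖ ≤ ε)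
    (hgradbd : ∀ t ∈ Finset.Icc 1 T, ‖L' t (f t)‖ ≤ Z)
    (hdist : ∀ t ∈ Finset.Icc 1 T, ‖f t - fstar‖ ≤ D) :
    ∑ t ∈ Finset.Icc 1 T, (L t (f t) - L t fstar) ≤
      (‖f 1 - fstar‖ ^ 2 / 2 + D + Z ^ 2 + 1) * Real.sqrt T := by
  have hTr : (1:ℝ) ≤ (T:ℝ) := by exact_mod_cast hT
  have hTr0 : (0:ℝ) < (T:ℝ) := by linarith
  set s : ℝ := Real.sqrt T with hsdef
  have hs1 : (1:ℝ) ≤ s := by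
    have h := Real.sqrt_le_sqrt hTr
    rwa [Real.sqrt_one] at h
  have hs0 : (0:ℝ) < s := by linarith
  have hs2 : s ^ 2 = (T:ℝ) := Real.sq_sqrt (le_of_lt hTr0)
  have hη0 : 0 < η := by rw [hη]; positivity
  have hε0 : 0 ≤ ε := by rw [hε]; positivity
  set C : ℝ := 2*ε*(D + η*Z) + ε^2 + η^2*Z^2 with hC
  -- per-step inequality
  have key : ∀ t ∈ Finset.Icc 1 T,
      2*η*(L t (f t) - L t fstar) ≤ ‖f t - fstar‖^2 - ‖f (t+1) - fstar‖^2 + C := by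
    intro t ht
    set g := L' t (f t) with hg
    set x := f t - fstar with hx
    set u := x - η • g with hu
    set x' := f (t+1) - fstar with hx'
    have hgZ : ‖g‖ ≤ Z := hgradbd t ht
    have hxD : ‖x‖ ≤ D := hdist t ht
    have he : ‖x' - u‖ ≤ ε := by
      have h1 : f (t+1) - (f t - η • g) = x' - u := by
        rw [hx', hu, hx]; abel
      rw [← h1]; exact hstep t ht
    have hu_norm : ‖u‖ ≤ D + η*Z := by
      calc ‖u‖ ≤ ‖x‖ + ‖η • g‖ := norm_sub_le _ _
        _ ≤ D + η*Z := by
            rw [norm_smul, Real.norm_eq_abs, abs_of_pos hη0]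
            exact add_le_add hxD (mul_le_mul_of_nonneg_left hgZ hη0.le)
    have hxle : ‖x'‖ ≤ ‖u‖ + ε := by
      calc ‖x'‖ = ‖u + (x' - u)‖ := by rw [add_sub_cancel]
        _ ≤ ‖u‖ + ‖x' - u‖ := norm_add_le _ _
        _ ≤ ‖u‖ + ε := by linarith
    have hx'sq : ‖x'‖^2 ≤ ‖u‖^2 + 2*ε*(D+η*Z) + ε^2 := by
      nlinarith [norm_nonneg x', norm_nonneg u, hu_norm, hε0, hxle]
    have hup : ‖u‖^2 = ‖x‖^2 - 2*η*⟪g, x⟫_ℝ + η^2*‖g‖^2 := by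
      rw [hu, @norm_sub_sq_real, inner_smul_right, norm_smul, Real.norm_eq_abs,
        abs_of_pos hη0, real_inner_comm]
      ring
    have hconvex : L t (f t) - L t fstar ≤ ⟪g, x⟫_ℝ :=
      grad_ineq_aux (hconv t ht) (hgrad t ht (f t)) fstar
    have hgsq : η^2*‖g‖^2 ≤ η^2*Z^2 :=
      mul_le_mul_of_nonneg_left (pow_le_pow_left₀ (norm_nonneg g) hgZ 2) (by positivity)
    have h2 : 2*η*(L t (f t) - L t fstar) ≤ 2*η*⟪g, x⟫_ℝ :=
      mul_le_mul_of_nonneg_left hconvex (by positivity)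
    linarith [hup, hx'sq, hgsq, h2]
  -- sum and telescope
  have htel : ∑ t ∈ Finset.Icc 1 T, (‖f t - fstar‖^2 - ‖f (t+1) - fstar‖^2)
      = ‖f 1 - fstar‖^2 - ‖f (1+T) - fstar‖^2 := by
    rw [← Finset.Ico_add_one_right_eq_Icc, Finset.sum_Ico_eq_sum_range]
    simpa [add_assoc] using Finset.sum_range_sub' (fun i => ‖f (1+i) - fstar‖^2) T
  have hsum : 2*η*∑ t ∈ Finset.Icc 1 T, (L t (f t) - L t fstar)
      ≤ ‖f 1 - fstar‖^2 + (T:ℝ)*C := by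
    rw [Finset.mul_sum]
    calc ∑ t ∈ Finset.Icc 1 T, (2*η*(L t (f t) - L t fstar))
        ≤ ∑ t ∈ Finset.Icc 1 T, (‖f t - fstar‖^2 - ‖f (t+1) - fstar‖^2 + C) :=
          Finset.sum_le_sum key
      _ = (∑ t ∈ Finset.Icc 1 T, (‖f t - fstar‖^2 - ‖f (t+1) - fstar‖^2)) + (T:ℝ)*C := by
          rw [Finset.sum_add_distrib, Finset.sum_const, Nat.card_Icc]
          simp [mul_comm]
      _ ≤ ‖f 1 - fstar‖^2 + (T:ℝ)*C := by
          rw [htel]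
          nlinarith [sq_nonneg ‖f (1+T) - fstar‖]
  -- bound T*C
  have hTCeq : (T:ℝ)*C = 2*D + 2*(Z/s) + 1/(T:ℝ) + Z^2 := by
    rw [hC, hε, hη, ← hs2]
    have : s ≠ 0 := ne_of_gt hs0
    field_simp
  have hTC : (T:ℝ)*C ≤ 2*D + 2*Z^2 + 2 := by
    rw [hTCeq]
    have h1 : Z/s ≤ Z := div_le_self hZ hs1
    have h2 : 1/(T:ℝ) ≤ 1 := by rw [div_le_one hTr0]; exact hTr
    nlinarith [sq_nonneg (Z-1)]
  have hηs : η * s = 1 := by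
    rw [hη]; field_simp
  have hrhs : 2*η*((‖f 1 - fstar‖^2/2 + D + Z^2 + 1)*s)
      = ‖f 1 - fstar‖^2 + 2*D + 2*Z^2 + 2 := by
    have h : 2*η*((‖f 1 - fstar‖^2/2 + D + Z^2 + 1)*s)
        = (η*s) * (‖f 1 - fstar‖^2 + 2*D + 2*Z^2 + 2) := by ring
    rw [h, hηs, one_mul]
  have hfinal : 2*η*∑ t ∈ Finset.Icc 1 T, (L t (f t) - L t fstar)
      ≤ 2*η*((‖f 1 - fstar‖^2/2 + D + Z^2 + 1)*s) := by
    rw [hrhs]; linarith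
  have h2η : (0:ℝ) < 2*η := by linarith
  exact le_of_mul_le_mul_left hfinal h2η
end
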